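/- Let n ≥ 2 and let f : M_{2n} → {0,1} satisfy: f(m) = 1 implies that {2n−1, 2n} is an edge of m. Define g : M_{2(n−1)} → {0,1} by g(m') = f(m' ∪ {{2n−1, 2n}}), where m' ∪ {{2n−1,2n}} denotes the perfect matching of [2n] obtained from the perfect matching m' of [2n−2] by adding the edge {2n−1, 2n}. Then deg g ≤ max(deg f − 1, 0). -/

import Mathlib

/-- A perfect matching of the complete graph on `[N]`, viewed as a fixed-point-free
involution of `Fin N`. -/
def PM (N : ℕ) := {m : Fin N → Fin N // (∀ i, m i ≠ i) ∧ ∀ i, m (m i) = i}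

instance (N : ℕ) : Fintype (PM N) := Subtype.fintype _
instance (N : ℕ) : DecidableEq (PM N) := fun a b =>
  decidable_of_iff (a.1 = b.1) Subtype.ext_iff.symm

/-- The edge set of a perfect matching. -/
def PM.edges {N : ℕ} (m : PM N) : Finset (Sym2 (Fin N)) :=
  Finset.univ.image fun i => s(i, m.1 i)

/-- Two perfect matchings are 2-intersecting: they share at least two edges. -/
def PMTwoIntersecting {N : ℕ} (m1 m2 : PM N) : Prop :=
  2 ≤ (PM.edges m1 ∩ PM.edges m2).card

/-- A family of perfect matchings is 2-intersecting. -/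
def PMTwoIntersectingFamily {N : ℕ} (F : Finset (PM N)) : Prop :=
  ∀ m1 ∈ F, ∀ m2 ∈ F, PMTwoIntersecting m1 m2

/-- A valid certificate: a set of pairwise disjoint non-loop unordered pairs. -/
def ValidEdgeSet {N : ℕ} (C : Finset (Sym2 (Fin N))) : Prop :=
  (∀ e ∈ C, ¬ e.IsDiag) ∧
    ∀ e ∈ C, ∀ f ∈ C, e ≠ f → ∀ a : Fin N, a ∈ e → a ∉ f

/-- `m` satisfies the certificate `C`: every pair of `C` is an edge of `m`. -/
def PMSatisfies {N : ℕ} (m : PM N) (C : Finset (Sym2 (Fin N))) : Prop :=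
  ∀ e ∈ C, e ∈ PM.edges m

/-- `C` is a certificate for `m` with respect to `f`. -/
def IsPMCertFor {N : ℕ} (f : PM N → ℝ) (m : PM N) (C : Finset (Sym2 (Fin N))) : Prop :=
  ValidEdgeSet C ∧ PMSatisfies m C ∧ ∀ m' : PM N, PMSatisfies m' C → f m' = f m

/-- The certificate complexity `C(f, m)`: the minimum size of a certificate for `m`. -/
noncomputable def pmCertComplexityAt {N : ℕ} (f : PM N → ℝ) (m : PM N) : ℕ :=
  sInf {k | ∃ C : Finset (Sym2 (Fin N)), C.card = k ∧ IsPMCertFor f m C}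

/-- The certificate complexity `C(f)`: the maximum of `C(f, m)` over all `m`. -/
noncomputable def pmCertComplexity {N : ℕ} (f : PM N → ℝ) : ℕ :=
  Finset.univ.sup fun m : PM N => pmCertComplexityAt f m

/-- The monomial `m ↦ ∏_{{i,j} ∈ S} x_{ij}(m)`. -/
def pmMonomial {N : ℕ} (S : Finset (Sym2 (Fin N))) : PM N → ℝ :=
  fun m => ∏ e ∈ S, if e ∈ PM.edges m then (1 : ℝ) else 0

/-- `f : M_N → ℝ` has degree at most `d`: it is a real linear combination of monomials
`∏_{{i,j} ∈ S} x_{ij}` with `|S| ≤ d`. -/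
def PMDegLE (N d : ℕ) (f : PM N → ℝ) : Prop :=
  f ∈ Submodule.span ℝ {g : PM N → ℝ |
    ∃ S : Finset (Sym2 (Fin N)), S.card ≤ d ∧ g = pmMonomial S}

/-- The degree of `f : M_N → ℝ`. -/
noncomputable def pmDeg (N : ℕ) (f : PM N → ℝ) : ℕ :=
  sInf {d | PMDegLE N d f}

/-- The coset `U_{i↔j} = {m : m(i) = j}`, for `p = (i, j)`. -/
def PMCoset {N : ℕ} (p : Fin N × Fin N) : Set (PM N) :=
  {m : PM N | m.1 p.1 = p.2}

/-- The coset of all matchings containing the (non-loop) unordered pair `e`. -/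
def PMCosetE {N : ℕ} (e : Sym2 (Fin N)) : Set (PM N) :=
  {m : PM N | e ∈ PM.edges m}

/-- `F` is `r`-covered: it is contained in a union of `r` pairwise compatible cosets. -/
def PMRCovered {N : ℕ} (r : ℕ) (F : Finset (PM N)) : Prop :=
  ∃ P : Finset (Sym2 (Fin N)), P.card = r ∧ (∀ e ∈ P, ¬ e.IsDiag) ∧
    (∀ e ∈ P, ∀ e' ∈ P, (PMCosetE e ∩ PMCosetE e').Nonempty) ∧
    ↑F ⊆ ⋃ e ∈ P, PMCosetE e

/-- A `t`-coset of `M_N`: the set of all perfect matchings containing `t` fixed pairwise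
disjoint edges. -/
def IsPMTCoset {N : ℕ} (t : ℕ) (S : Set (PM N)) : Prop :=
  ∃ C : Finset (Sym2 (Fin N)), C.card = t ∧ ValidEdgeSet C ∧
    S = {m : PM N | ∀ e ∈ C, e ∈ PM.edges m}

/-- Extend a perfect matching of `[k]` to a perfect matching of `[N]` (where `N = k + 2`)
by adding the edge joining the two last points. -/
def extPM (k N : ℕ) (h : N = k + 2) (m : PM k) : PM N := by
  refine ⟨fun i => if hi : (i : ℕ) < k then
      ⟨m.1 ⟨i, hi⟩, by have := (m.1 ⟨i, hi⟩).isLt; omega⟩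
    else if (i : ℕ) = k then ⟨k + 1, by omega⟩ else ⟨k, by omega⟩, ?_, ?_⟩
  · intro i
    dsimp only
    split_ifs with h1 h2
    · have := m.2.1 ⟨i, h1⟩
      simp only [Ne, Fin.ext_iff] at this ⊢
      exact this
    · simp only [Ne, Fin.ext_iff]
      omega
    · have : (i : ℕ) < N := i.isLt
      simp only [Ne, Fin.ext_iff]
      omega
  · intro i
    dsimp only
    by_cases h1 : (i : ℕ) < k
    · rw [dif_pos h1]
      have h2 : ((m.1 ⟨i, h1⟩ : ℕ)) < k := (m.1 ⟨i, h1⟩).isLt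
      rw [dif_pos h2]
      have := m.2.2 ⟨i, h1⟩
      simp only [Fin.ext_iff] at this ⊢
      simpa using this
    · rw [dif_neg h1]
      by_cases h2 : (i : ℕ) = k
      · rw [if_pos h2]
        have : ¬ ((k + 1 : ℕ) < k) := by omega
        rw [dif_neg (by simp)]
        rw [if_neg (by simp)]
        simp [Fin.ext_iff]
        omega
      · rw [if_neg h2]
        rw [dif_neg (by simp)]
        rw [if_pos (by simp)]
        have : (i : ℕ) < N := i.isLt
        simp [Fin.ext_iff]
        omega

/-!
Write `u = K`, `v = K + 1` for the two vertices added by `extPM`, and for `a ∈ [K]` let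
`swapExtPM a m` be `m ∪ {{u, v}}` with the pairs `{u, v}`, `{a, m a}` rewired into `{u, a}`,
`{v, m a}`. The operator `Ψ_c F (m) = c F (m ∪ {{u, v}}) - ∑ₐ F (swapExtPM a m)`
(`rewiringOp c`) is linear, and `Ψ_c f = c g` when `f` vanishes off the matchings
containing `{u, v}`.

Take `d = deg f` and `c = K - 2d`. A monomial containing a pair at `u` or `v` loses that pair
under `Ψ_c`; an interior monomial `x_T` is sent to `(2|T| - 2d) x_T`, because exactly `K - 2|T|`
of the rewirings keep every pair of a matching `T`. Hence `Ψ_c` maps degree `≤ d` into degree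
`≤ d - 1`, which gives `deg g ≤ d - 1` when `2d < K`. When `2d ≥ K` there is nothing to prove,
as every function on `M_K` has degree at most `K/2 - 1`.
-/

namespace PM

variable {N : ℕ}

lemma mk_mem_edges_iff {m : PM N} {i j : Fin N} : s(i, j) ∈ m.edges ↔ m.1 i = j := by
  simp only [edges, Finset.mem_image, Finset.mem_univ, true_and, Sym2.eq_iff]
  constructor
  · rintro ⟨a, ⟨rfl, rfl⟩ | ⟨rfl, rfl⟩⟩
    · rfl
    · exact m.2.2 a
  · exact fun h => ⟨i, Or.inl ⟨rfl, h⟩⟩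

lemma mem_iff_eq_of_mem_edges {m : PM N} {e : Sym2 (Fin N)} (he : e ∈ m.edges) {a : Fin N} :
    a ∈ e ↔ e = s(a, m.1 a) := by
  induction e using Sym2.ind with
  | _ i j =>
    rw [mk_mem_edges_iff] at he
    subst he
    constructor
    · intro h
      rcases Sym2.mem_iff.1 h with rfl | h
      · rfl
      · rw [h, m.2.2, Sym2.eq_swap]
    · intro h
      exact h ▸ Sym2.mem_mk_left _ _

lemma apply_mem_iff_of_mem_edges {m : PM N} {e : Sym2 (Fin N)} (he : e ∈ m.edges) (a : Fin N) :
    m.1 a ∈ e ↔ a ∈ e := by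
  rw [mem_iff_eq_of_mem_edges he, mem_iff_eq_of_mem_edges he, m.2.2, Sym2.eq_swap]

lemma card_filter_mk_mem {m : PM N} {T : Finset (Sym2 (Fin N))} (hT : T ⊆ m.edges) :
    (Finset.univ.filter fun a => s(a, m.1 a) ∈ T).card = 2 * T.card := by
  have hmaps : Set.MapsTo (fun a => s(a, m.1 a))
      ↑(Finset.univ.filter fun a => s(a, m.1 a) ∈ T) ↑T :=
    fun a ha => (Finset.mem_filter.1 ha).2
  rw [Finset.card_eq_sum_card_fiberwise hmaps, Finset.sum_const_nat (m := 2), mul_comm]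
  intro e he
  obtain ⟨i, rfl⟩ : ∃ i, s(i, m.1 i) = e := by
    simpa [edges] using hT he
  have hfiber : (Finset.univ.filter fun a => s(a, m.1 a) ∈ T).filter
      (fun a => s(a, m.1 a) = s(i, m.1 i)) = {i, m.1 i} := by
    ext a
    simp only [Finset.mem_filter, Finset.mem_univ, true_and, Finset.mem_insert,
      Finset.mem_singleton]
    constructor
    · rintro ⟨-, h⟩
      exact Sym2.mem_iff.1 ((mem_iff_eq_of_mem_edges (hT he)).2 h.symm)
    · intro h
      have h' := (mem_iff_eq_of_mem_edges (hT he) (a := a)).1 (by simpa using h)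
      exact ⟨h' ▸ he, h'.symm⟩
  rw [hfiber, Finset.card_pair (m.2.1 i).symm]

lemma two_mul_card_edges (m : PM N) : 2 * m.edges.card = N := by
  rw [← card_filter_mk_mem subset_rfl, Finset.filter_true_of_mem
    (fun a _ => mk_mem_edges_iff.2 rfl), Finset.card_univ, Fintype.card_fin]

lemma card_filter_forall_not_mem {m : PM N} {T : Finset (Sym2 (Fin N))}
    (hT : T ⊆ m.edges) :
    ((Finset.univ.filter fun a => ∀ e ∈ T, a ∉ e).card : ℝ) = N - 2 * T.card := by
  have hfilter : (Finset.univ.filter fun a => ∀ e ∈ T, a ∉ e) =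
      Finset.univ.filter fun a => ¬ s(a, m.1 a) ∈ T := by
    ext a
    simp only [Finset.mem_filter, Finset.mem_univ, true_and]
    refine ⟨fun h hT' => h _ hT' (Sym2.mem_mk_left _ _), fun h e he ha => h ?_⟩
    rwa [← (mem_iff_eq_of_mem_edges (hT he)).1 ha]
  have hsum := Finset.card_filter_add_card_filter_not (s := Finset.univ)
    (fun a => s(a, m.1 a) ∈ T)
  rw [card_filter_mk_mem hT, Finset.card_univ, Fintype.card_fin] at hsum
  rw [hfilter, eq_sub_iff_add_eq']
  exact_mod_cast hsum

lemma eq_of_subset_edges_erase {m m₀ : PM N} (i : Fin N)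
    (h : m₀.edges.erase s(i, m₀.1 i) ⊆ m.edges) : m = m₀ := by
  have agree : ∀ j, j ≠ i → j ≠ m₀.1 i → m.1 j = m₀.1 j := by
    intro j hi hmi
    refine mk_mem_edges_iff.1 (h (Finset.mem_erase.2 ⟨?_, mk_mem_edges_iff.2 rfl⟩))
    rw [Ne, Sym2.eq_iff]
    rintro (⟨rfl, -⟩ | ⟨rfl, -⟩) <;> contradiction
  have at_i : m.1 i = m₀.1 i := by
    by_contra hne
    have h₁ := agree (m.1 i) (m.2.1 i) hne
    rw [m.2.2] at h₁
    have h₂ := congrArg m₀.1 h₁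
    rw [m₀.2.2] at h₂
    exact hne h₂.symm
  apply Subtype.ext
  funext j
  by_cases hi : j = i
  · rw [hi, at_i]
  by_cases hmi : j = m₀.1 i
  · rw [hmi, ← at_i, m.2.2, at_i, m₀.2.2]
  exact agree j hi hmi

def conj (σ : Equiv.Perm (Fin N)) (m : PM N) : PM N :=
  ⟨fun i => σ (m.1 (σ.symm i)),
    fun i h => m.2.1 _ ((Equiv.eq_symm_apply σ).2 h),
    fun i => by simp [m.2.2]⟩

lemma mem_edges_conj {σ : Equiv.Perm (Fin N)} {m : PM N} {e : Sym2 (Fin N)} :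
    e ∈ (m.conj σ).edges ↔ e.map σ.symm ∈ m.edges := by
  induction e using Sym2.ind with
  | _ i j =>
    rw [Sym2.map_mk, mk_mem_edges_iff, mk_mem_edges_iff]
    exact (Equiv.eq_symm_apply σ).symm

end PM

lemma pmMonomial_eq_ite {N : ℕ} (S : Finset (Sym2 (Fin N))) (m : PM N) :
    pmMonomial S m = if S ⊆ m.edges then 1 else 0 := by
  rw [pmMonomial, Finset.prod_boole]
  rfl

lemma pmMonomial_insert {N : ℕ} (e : Sym2 (Fin N)) (S : Finset (Sym2 (Fin N))) (m : PM N) :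
    pmMonomial (insert e S) m = (if e ∈ m.edges then 1 else 0) * pmMonomial S m := by
  simp only [pmMonomial_eq_ite, Finset.insert_subset_iff, ite_and, ite_mul, one_mul, zero_mul]

lemma pmMonomial_conj {N : ℕ} (S : Finset (Sym2 (Fin N))) (σ : Equiv.Perm (Fin N)) (m : PM N) :
    pmMonomial S (m.conj σ) = pmMonomial (S.image (Sym2.map σ.symm)) m := by
  simp only [pmMonomial_eq_ite, Finset.image_subset_iff]
  simp only [Finset.subset_iff, PM.mem_edges_conj]

lemma pmMonomial_edges_erase {N : ℕ} (m₀ : PM N) (i : Fin N) (m : PM N) :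
    pmMonomial (m₀.edges.erase s(i, m₀.1 i)) m = if m = m₀ then 1 else 0 := by
  rw [pmMonomial_eq_ite]
  refine if_congr ⟨PM.eq_of_subset_edges_erase i, ?_⟩ rfl rfl
  rintro rfl
  exact Finset.erase_subset _ _

namespace PMDegLE

variable {N d : ℕ} {f : PM N → ℝ}

lemma mono {d' : ℕ} (hf : PMDegLE N d f) (h : d ≤ d') : PMDegLE N d' f :=
  Submodule.span_mono (by rintro _ ⟨S, hS, rfl⟩; exact ⟨S, hS.trans h, rfl⟩) hf

lemma monomial {S : Finset (Sym2 (Fin N))} (hS : S.card ≤ d) : PMDegLE N d (pmMonomial S) :=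
  Submodule.subset_span ⟨S, hS, rfl⟩

lemma smul (c : ℝ) (hf : PMDegLE N d f) : PMDegLE N d (c • f) :=
  Submodule.smul_mem _ c hf

lemma zero : PMDegLE N d 0 :=
  Submodule.zero_mem _

lemma map {K d' : ℕ} (Φ : (PM N → ℝ) →ₗ[ℝ] (PM K → ℝ))
    (hΦ : ∀ S : Finset (Sym2 (Fin N)), S.card ≤ d → PMDegLE K d' (Φ (pmMonomial S)))
    (hf : PMDegLE N d f) : PMDegLE K d' (Φ f) :=
  (Submodule.map_span_le Φ _ _).2 (by rintro _ ⟨S, hS, rfl⟩; exact hΦ S hS)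
    (Submodule.mem_map_of_mem hf)

lemma pmDeg_le (hf : PMDegLE N d f) : pmDeg N f ≤ d :=
  Nat.sInf_le hf

lemma at_pmDeg (hf : PMDegLE N d f) : PMDegLE N (pmDeg N f) f :=
  Nat.sInf_mem (s := {d | PMDegLE N d f}) ⟨d, hf⟩

end PMDegLE

lemma PMDegLE_div_two_sub_one {N : ℕ} (hN : 0 < N) (f : PM N → ℝ) : PMDegLE N (N / 2 - 1) f := by
  let i₀ : Fin N := ⟨0, hN⟩
  have hf : f = ∑ m₀, f m₀ • pmMonomial (m₀.edges.erase s(i₀, m₀.1 i₀)) := by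
    funext m
    simp [Finset.sum_apply, pmMonomial_edges_erase]
  rw [hf]
  refine Submodule.sum_mem _ fun m₀ _ => PMDegLE.smul _ (PMDegLE.monomial ?_)
  rw [Finset.card_erase_of_mem (PM.mk_mem_edges_iff.2 rfl)]
  have := m₀.two_mul_card_edges
  omega

section Extension

variable {K : ℕ}

def extU (K : ℕ) : Fin (K + 2) := ⟨K, by omega⟩

def extV (K : ℕ) : Fin (K + 2) := ⟨K + 1, by omega⟩

@[simp] lemma castAdd_ne_extU (i : Fin K) : Fin.castAdd 2 i ≠ extU K :=
  Fin.ne_of_val_ne (by simpa [extU] using i.isLt.ne)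

@[simp] lemma castAdd_ne_extV (i : Fin K) : Fin.castAdd 2 i ≠ extV K :=
  Fin.ne_of_val_ne (by simp [extV]; omega)

@[simp] lemma extU_ne_castAdd (i : Fin K) : extU K ≠ Fin.castAdd 2 i :=
  (castAdd_ne_extU i).symm

@[simp] lemma extV_ne_castAdd (i : Fin K) : extV K ≠ Fin.castAdd 2 i :=
  (castAdd_ne_extV i).symm

@[simp] lemma extU_ne_extV : extU K ≠ extV K :=
  Fin.ne_of_val_ne (by simp [extU, extV])

lemma eq_extU_or_eq_extV_or_exists_castAdd (p : Fin (K + 2)) :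
    p = extU K ∨ p = extV K ∨ ∃ i, Fin.castAdd 2 i = p := by
  obtain ⟨p, hp⟩ := p
  by_cases h : p < K
  · exact Or.inr (Or.inr ⟨⟨p, h⟩, rfl⟩)
  · simp only [extU, extV, Fin.mk.injEq]
    omega

lemma extPM_castAdd (m : PM K) (i : Fin K) :
    (extPM K (K + 2) rfl m).1 (Fin.castAdd 2 i) = Fin.castAdd 2 (m.1 i) := by
  apply Fin.ext
  simp [extPM]

lemma extPM_extU (m : PM K) : (extPM K (K + 2) rfl m).1 (extU K) = extV K := by
  simp [extPM, extU, extV]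

lemma extPM_extV (m : PM K) : (extPM K (K + 2) rfl m).1 (extV K) = extU K := by
  simp [extPM, extU, extV]

def swapExtPM (a : Fin K) (m : PM K) : PM (K + 2) :=
  (extPM K (K + 2) rfl m).conj (Equiv.swap (extV K) (Fin.castAdd 2 a))

lemma swapExtPM_apply (a : Fin K) (m : PM K) (i : Fin (K + 2)) :
    (swapExtPM a m).1 i = Equiv.swap (extV K) (Fin.castAdd 2 a)
      ((extPM K (K + 2) rfl m).1 (Equiv.swap (extV K) (Fin.castAdd 2 a) i)) :=
  rfl

lemma swapExtPM_extU (a : Fin K) (m : PM K) : (swapExtPM a m).1 (extU K) = Fin.castAdd 2 a := by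
  rw [swapExtPM_apply, Equiv.swap_apply_of_ne_of_ne extU_ne_extV (extU_ne_castAdd a),
    extPM_extU, Equiv.swap_apply_left]

lemma swapExtPM_extV (a : Fin K) (m : PM K) :
    (swapExtPM a m).1 (extV K) = Fin.castAdd 2 (m.1 a) := by
  rw [swapExtPM_apply, Equiv.swap_apply_left, extPM_castAdd,
    Equiv.swap_apply_of_ne_of_ne (castAdd_ne_extV _) (by simpa using m.2.1 a)]

lemma swapExtPM_castAdd (a : Fin K) (m : PM K) (p : Fin K) :
    (swapExtPM a m).1 (Fin.castAdd 2 p) =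
      if p = a then extU K else if m.1 p = a then extV K else Fin.castAdd 2 (m.1 p) := by
  rw [swapExtPM_apply]
  by_cases hpa : p = a
  · subst hpa
    rw [Equiv.swap_apply_right, extPM_extV, if_pos rfl,
      Equiv.swap_apply_of_ne_of_ne extU_ne_extV (extU_ne_castAdd p)]
  rw [Equiv.swap_apply_of_ne_of_ne (castAdd_ne_extV p) (by simpa using hpa), extPM_castAdd,
    if_neg hpa]
  by_cases hmp : m.1 p = a
  · rw [if_pos hmp, hmp, Equiv.swap_apply_right]
  · rw [if_neg hmp, Equiv.swap_apply_of_ne_of_ne (castAdd_ne_extV _) (by simpa using hmp)]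

lemma mk_extU_mem_edges_extPM {m : PM K} {w : Fin (K + 2)} :
    s(extU K, w) ∈ (extPM K (K + 2) rfl m).edges ↔ w = extV K := by
  rw [PM.mk_mem_edges_iff, extPM_extU, eq_comm]

lemma mk_extV_mem_edges_extPM {m : PM K} {w : Fin (K + 2)} :
    s(extV K, w) ∈ (extPM K (K + 2) rfl m).edges ↔ w = extU K := by
  rw [PM.mk_mem_edges_iff, extPM_extV, eq_comm]

lemma map_castAdd_mem_edges_extPM {m : PM K} {e : Sym2 (Fin K)} :
    e.map (Fin.castAdd 2) ∈ (extPM K (K + 2) rfl m).edges ↔ e ∈ m.edges := by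
  induction e using Sym2.ind with
  | _ p q =>
    rw [Sym2.map_mk, PM.mk_mem_edges_iff, PM.mk_mem_edges_iff, extPM_castAdd, Fin.castAdd_inj]

lemma mem_edges_extPM_of_extU_mem_or_extV_mem (m : PM K) {e : Sym2 (Fin (K + 2))}
    (he : extU K ∈ e ∨ extV K ∈ e) :
    e ∈ (extPM K (K + 2) rfl m).edges ↔ e = s(extU K, extV K) := by
  rcases he with he | he <;> obtain ⟨w, rfl⟩ := Sym2.mem_iff_exists.1 he
  · rw [mk_extU_mem_edges_extPM, Sym2.congr_right]
  · rw [mk_extV_mem_edges_extPM, Sym2.eq_swap (a := extU K), Sym2.congr_right]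

lemma mk_extU_mem_edges_swapExtPM {a : Fin K} {m : PM K} {w : Fin (K + 2)} :
    s(extU K, w) ∈ (swapExtPM a m).edges ↔ w = Fin.castAdd 2 a := by
  rw [PM.mk_mem_edges_iff, swapExtPM_extU, eq_comm]

lemma mk_extV_mem_edges_swapExtPM {a : Fin K} {m : PM K} {w : Fin (K + 2)} :
    s(extV K, w) ∈ (swapExtPM a m).edges ↔ w = Fin.castAdd 2 (m.1 a) := by
  rw [PM.mk_mem_edges_iff, swapExtPM_extV, eq_comm]

lemma map_castAdd_mem_edges_swapExtPM {a : Fin K} {m : PM K} {e : Sym2 (Fin K)} :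
    e.map (Fin.castAdd 2) ∈ (swapExtPM a m).edges ↔ e ∈ m.edges ∧ a ∉ e := by
  induction e using Sym2.ind with
  | _ p q =>
    rw [Sym2.map_mk, PM.mk_mem_edges_iff, PM.mk_mem_edges_iff, swapExtPM_castAdd, Sym2.mem_iff]
    by_cases hpa : p = a
    · simp [hpa]
    by_cases hmp : m.1 p = a
    · simp only [hpa, hmp, if_false, if_true, extV_ne_castAdd, false_iff]
      rintro ⟨rfl, h⟩
      exact h (Or.inr rfl)
    · simp only [hpa, hmp, if_false, Fin.castAdd_inj]
      constructor
      · rintro rfl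
        exact ⟨rfl, by rintro (h | h) <;> simp_all⟩
      · exact fun h => h.1

lemma pmMonomial_image_castAdd_extPM (T : Finset (Sym2 (Fin K))) (m : PM K) :
    pmMonomial (T.image (Sym2.map (Fin.castAdd 2))) (extPM K (K + 2) rfl m) = pmMonomial T m := by
  simp only [pmMonomial_eq_ite, Finset.image_subset_iff, map_castAdd_mem_edges_extPM]
  simp only [Finset.subset_iff]

lemma pmMonomial_image_castAdd_swapExtPM (T : Finset (Sym2 (Fin K))) (a : Fin K) (m : PM K) :
    pmMonomial (T.image (Sym2.map (Fin.castAdd 2))) (swapExtPM a m) =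
      (if ∀ e ∈ T, a ∉ e then 1 else 0) * pmMonomial T m := by
  simp only [pmMonomial_eq_ite, Finset.image_subset_iff, map_castAdd_mem_edges_swapExtPM]
  simp only [Finset.subset_iff, forall_and, ite_and, ite_mul, one_mul, zero_mul]
  split_ifs <;> tauto

lemma exists_image_castAdd_eq {S : Finset (Sym2 (Fin (K + 2)))}
    (hS : ∀ e ∈ S, extU K ∉ e ∧ extV K ∉ e) :
    ∃ T : Finset (Sym2 (Fin K)), T.image (Sym2.map (Fin.castAdd 2)) = S ∧ T.card = S.card := by
  have hsub : S ⊆ Finset.univ.image (Sym2.map (Fin.castAdd 2)) := by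
    intro e he
    have hpt : ∀ p ∈ e, ∃ i, Fin.castAdd 2 i = p := fun p hp => by
      rcases eq_extU_or_eq_extV_or_exists_castAdd p with rfl | rfl | h
      · exact absurd hp (hS e he).1
      · exact absurd hp (hS e he).2
      · exact h
    induction e using Sym2.ind with
    | _ p q =>
      obtain ⟨i, rfl⟩ := hpt p (Sym2.mem_mk_left _ _)
      obtain ⟨j, rfl⟩ := hpt q (Sym2.mem_mk_right _ _)
      exact Finset.mem_image.2 ⟨s(i, j), Finset.mem_univ _, Sym2.map_mk _ _ _⟩
  obtain ⟨T, -, hT⟩ := Finset.subset_image_iff.1 hsub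
  refine ⟨T, hT, ?_⟩
  rw [← hT, Finset.card_image_of_injective _ (Sym2.map.injective (Fin.castAdd_injective _ _))]

lemma PMDegLE_pmMonomial_comp_extPM (S : Finset (Sym2 (Fin (K + 2)))) :
    PMDegLE K S.card fun m => pmMonomial S (extPM K (K + 2) rfl m) := by
  induction S using Finset.strongInduction with
  | H S ih =>
    by_cases hnew : ∃ e ∈ S, extU K ∈ e ∨ extV K ∈ e
    · obtain ⟨e, he, hnew⟩ := hnew
      have hsplit : (fun m => pmMonomial S (extPM K (K + 2) rfl m)) =
          (if e = s(extU K, extV K) then 1 else 0 : ℝ) •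
            fun m => pmMonomial (S.erase e) (extPM K (K + 2) rfl m) := by
        funext m
        conv_lhs => rw [← Finset.insert_erase he]
        simp only [pmMonomial_insert, mem_edges_extPM_of_extU_mem_or_extV_mem m hnew,
          Pi.smul_apply, smul_eq_mul]
      rw [hsplit]
      exact ((ih _ (Finset.erase_ssubset he)).mono (Finset.card_erase_le)).smul _
    · simp only [not_exists, not_and, not_or] at hnew
      obtain ⟨T, rfl, hT⟩ := exists_image_castAdd_eq hnew
      simp only [pmMonomial_image_castAdd_extPM]
      exact PMDegLE.monomial hT.le

lemma PMDegLE_pmMonomial_comp_swapExtPM (S : Finset (Sym2 (Fin (K + 2)))) (a : Fin K) :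
    PMDegLE K S.card fun m => pmMonomial S (swapExtPM a m) := by
  simp only [swapExtPM, pmMonomial_conj]
  exact (PMDegLE_pmMonomial_comp_extPM _).mono Finset.card_image_le

def rewiringOp (c : ℝ) : (PM (K + 2) → ℝ) →ₗ[ℝ] (PM K → ℝ) :=
  c • LinearMap.funLeft ℝ ℝ (extPM K (K + 2) rfl) - ∑ a, LinearMap.funLeft ℝ ℝ (swapExtPM a)

lemma rewiringOp_apply (c : ℝ) (F : PM (K + 2) → ℝ) (m : PM K) :
    rewiringOp c F m = c * F (extPM K (K + 2) rfl m) - ∑ a, F (swapExtPM a m) := by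
  simp [rewiringOp, LinearMap.sum_apply, Finset.sum_apply, LinearMap.funLeft_apply]

lemma PMDegLE_rewiringOp_of_mk_extU_mem (c : ℝ) {S : Finset (Sym2 (Fin (K + 2)))}
    {w : Fin (K + 2)} (hw : s(extU K, w) ∈ S) :
    PMDegLE K (S.card - 1) (rewiringOp c (pmMonomial S)) := by
  have hcard : (S.erase s(extU K, w)).card = S.card - 1 := Finset.card_erase_of_mem hw
  have hsplit : ∀ m, rewiringOp c (pmMonomial S) m =
      c * ((if w = extV K then 1 else 0) *
          pmMonomial (S.erase s(extU K, w)) (extPM K (K + 2) rfl m)) -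
        ∑ a, (if w = Fin.castAdd 2 a then 1 else 0) *
          pmMonomial (S.erase s(extU K, w)) (swapExtPM a m) := by
    intro m
    rw [rewiringOp_apply, ← Finset.insert_erase hw]
    simp only [pmMonomial_insert, mk_extU_mem_edges_extPM, mk_extU_mem_edges_swapExtPM,
      Finset.erase_insert_eq_erase, Finset.erase_idem]
  rcases eq_extU_or_eq_extV_or_exists_castAdd w with rfl | rfl | ⟨x, rfl⟩
  · have : rewiringOp c (pmMonomial S) = 0 := funext fun m => by simp [hsplit]
    rw [this]
    exact PMDegLE.zero
  · have : rewiringOp c (pmMonomial S) =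
        c • fun m => pmMonomial (S.erase s(extU K, extV K)) (extPM K (K + 2) rfl m) :=
      funext fun m => by simp [hsplit]
    rw [this, ← hcard]
    exact (PMDegLE_pmMonomial_comp_extPM _).smul c
  · have : rewiringOp c (pmMonomial S) =
        (-1 : ℝ) • fun m => pmMonomial (S.erase s(extU K, Fin.castAdd 2 x)) (swapExtPM x m) :=
      funext fun m => by simp [hsplit]
    rw [this, ← hcard]
    exact (PMDegLE_pmMonomial_comp_swapExtPM _ x).smul _

lemma PMDegLE_rewiringOp_of_mk_extV_mem (c : ℝ) {S : Finset (Sym2 (Fin (K + 2)))}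
    {w : Fin (K + 2)} (hU : ∀ e ∈ S, extU K ∉ e) (hw : s(extV K, w) ∈ S) :
    PMDegLE K (S.card - 1) (rewiringOp c (pmMonomial S)) := by
  by_cases hS : ∃ M : PM (K + 2), S ⊆ M.edges
  swap
  · have : pmMonomial S = 0 := funext fun M => by simp [pmMonomial_eq_ite, not_exists.1 hS M]
    rw [this, map_zero]
    exact PMDegLE.zero
  obtain ⟨M, hM⟩ := hS
  have hMv : M.1 (extV K) = w := PM.mk_mem_edges_iff.1 (hM hw)
  obtain ⟨y, rfl⟩ : ∃ y, Fin.castAdd 2 y = w := by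
    rcases eq_extU_or_eq_extV_or_exists_castAdd w with rfl | rfl | h
    · exact absurd (Sym2.mem_mk_right _ _) (hU _ hw)
    · exact absurd hMv (M.2.1 _)
    · exact h
  have hrest : ∀ e ∈ S.erase s(extV K, Fin.castAdd 2 y), extU K ∉ e ∧ extV K ∉ e := by
    intro e he
    obtain ⟨hne, heS⟩ := Finset.mem_erase.1 he
    refine ⟨hU e heS, fun hv => hne ?_⟩
    rw [(PM.mem_iff_eq_of_mem_edges (hM heS)).1 hv, hMv]
  obtain ⟨T, hTS, hT⟩ := exists_image_castAdd_eq hrest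
  have hfun : rewiringOp c (pmMonomial S) =
      (-(if ∀ e ∈ T, y ∉ e then 1 else 0) : ℝ) • pmMonomial T := by
    funext m
    rw [rewiringOp_apply, ← Finset.insert_erase hw, ← hTS]
    simp only [pmMonomial_insert, mk_extV_mem_edges_extPM, mk_extV_mem_edges_swapExtPM,
      pmMonomial_image_castAdd_swapExtPM, Fin.castAdd_inj, castAdd_ne_extU, if_false, zero_mul,
      mul_zero, zero_sub, Pi.smul_apply, smul_eq_mul, ite_mul, one_mul]
    have hpartner : ∀ x, y = m.1 x ↔ x = m.1 y := fun x =>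
      eq_comm.trans (Function.Involutive.eq_iff m.2.2)
    simp only [hpartner, Finset.sum_ite_eq', Finset.mem_univ, if_true]
    by_cases hTm : T ⊆ m.edges
    · have hflip : (∀ e ∈ T, m.1 y ∉ e) ↔ ∀ e ∈ T, y ∉ e :=
        forall₂_congr fun e he => not_congr (PM.apply_mem_iff_of_mem_edges (hTm he) y)
      simp only [hflip]
      split_ifs <;> ring
    · simp [pmMonomial_eq_ite, hTm]
  rw [hfun]
  have := Finset.card_erase_of_mem hw
  exact (PMDegLE.monomial (by omega)).smul _

lemma rewiringOp_pmMonomial_image_castAdd (c : ℝ) (T : Finset (Sym2 (Fin K))) :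
    rewiringOp c (pmMonomial (T.image (Sym2.map (Fin.castAdd 2)))) =
      (c - (K - 2 * T.card)) • pmMonomial T := by
  funext m
  simp only [rewiringOp_apply, pmMonomial_image_castAdd_extPM, pmMonomial_image_castAdd_swapExtPM,
    ← Finset.sum_mul, Finset.sum_boole, Pi.smul_apply, smul_eq_mul]
  by_cases hT : T ⊆ m.edges
  · rw [PM.card_filter_forall_not_mem hT]
    ring
  · simp [pmMonomial_eq_ite, hT]

lemma PMDegLE_rewiringOp_pmMonomial {d : ℕ} {S : Finset (Sym2 (Fin (K + 2)))} (hS : S.card ≤ d) :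
    PMDegLE K (d - 1) (rewiringOp ((K : ℝ) - 2 * d) (pmMonomial S)) := by
  by_cases hU : ∃ w, s(extU K, w) ∈ S
  · obtain ⟨w, hw⟩ := hU
    exact (PMDegLE_rewiringOp_of_mk_extU_mem _ hw).mono (by omega)
  have hU' : ∀ e ∈ S, extU K ∉ e := fun e he hu => by
    obtain ⟨w, rfl⟩ := Sym2.mem_iff_exists.1 hu
    exact hU ⟨w, he⟩
  by_cases hV : ∃ w, s(extV K, w) ∈ S
  · obtain ⟨w, hw⟩ := hV
    exact (PMDegLE_rewiringOp_of_mk_extV_mem _ hU' hw).mono (by omega)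
  have hV' : ∀ e ∈ S, extV K ∉ e := fun e he hv => by
    obtain ⟨w, rfl⟩ := Sym2.mem_iff_exists.1 hv
    exact hV ⟨w, he⟩
  obtain ⟨T, rfl, hT⟩ := exists_image_castAdd_eq fun e he => ⟨hU' e he, hV' e he⟩
  rw [rewiringOp_pmMonomial_image_castAdd]
  rcases (hT ▸ hS : T.card ≤ d).lt_or_eq with hlt | heq
  · exact (PMDegLE.monomial (by omega)).smul _
  · rw [heq, sub_sub_sub_cancel_left, sub_self, zero_smul]
    exact PMDegLE.zero

lemma PMDegLE.rewiringOp {d : ℕ} {f : PM (K + 2) → ℝ} (hf : PMDegLE (K + 2) d f) :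
    PMDegLE K (d - 1) (rewiringOp ((K : ℝ) - 2 * d) f) :=
  hf.map _ fun _ hS => PMDegLE_rewiringOp_pmMonomial hS

lemma rewiringOp_eq_smul_comp_extPM (c : ℝ) {f : PM (K + 2) → ℝ}
    (hf : ∀ M, f M ≠ 0 → M.1 (extU K) = extV K) :
    rewiringOp c f = c • (f ∘ extPM K (K + 2) rfl) := by
  have hswap : ∀ a m, f (swapExtPM a m) = 0 := fun a m => by
    by_contra h
    exact castAdd_ne_extV a (by rw [← swapExtPM_extU a m, hf _ h])
  funext m
  simp [rewiringOp_apply, hswap]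

end Extension

theorem pmDeg_comp_extPM_le {K N : ℕ} (h : N = K + 2) (hK : 0 < K) (f : PM N → ℝ)
    (hf : ∀ M : PM N, f M ≠ 0 → M.1 ⟨K, by omega⟩ = ⟨K + 1, by omega⟩) :
    pmDeg K (f ∘ extPM K N h) ≤ pmDeg N f - 1 := by
  subst h
  set d := pmDeg (K + 2) f
  have hfd : PMDegLE (K + 2) d f := (PMDegLE_div_two_sub_one (by omega) f).at_pmDeg
  rcases lt_or_ge (2 * d) K with hd | hd
  · have hc : (K : ℝ) - 2 * d ≠ 0 := by
      have : (2 * d : ℝ) < K := by exact_mod_cast hd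
      linarith
    have hg : f ∘ extPM K (K + 2) rfl = ((K : ℝ) - 2 * d)⁻¹ • rewiringOp ((K : ℝ) - 2 * d) f := by
      rw [rewiringOp_eq_smul_comp_extPM _ hf, smul_smul, inv_mul_cancel₀ hc, one_smul]
    rw [hg]
    exact (hfd.rewiringOp.smul _).pmDeg_le
  · exact (PMDegLE_div_two_sub_one hK _).pmDeg_le.trans (by omega)

/-- Degree reduction for the perfect matching scheme: if
`f : M_{2n} → {0,1}` vanishes outside the coset of matchings containing the edge
`{2n-1, 2n}`, then the restriction `g` of `f` to that coset (a function on `M_{2(n-1)}`)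
satisfies `deg g ≤ max (deg f - 1) 0`. -/
theorem pm_degree_reduction
    (n : ℕ) (hn : 2 ≤ n) (f : PM (2 * n) → ℝ)
    (hBool : ∀ m, f m = 0 ∨ f m = 1)
    (hfix : ∀ m : PM (2 * n), f m = 1 →
      m.1 ⟨2 * n - 2, by omega⟩ = ⟨2 * n - 1, by omega⟩)
    (g : PM (2 * (n - 1)) → ℝ)
    (hg : ∀ m' : PM (2 * (n - 1)), g m' = f (extPM (2 * (n - 1)) (2 * n) (by omega) m')) :
    pmDeg (2 * (n - 1)) g ≤ max (pmDeg (2 * n) f - 1) 0 := by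
  have hsupp : ∀ M : PM (2 * n), f M ≠ 0 →
      M.1 ⟨2 * (n - 1), by omega⟩ = ⟨2 * (n - 1) + 1, by omega⟩ := by
    intro M hM
    convert hfix M ((hBool M).resolve_left hM) using 2
    · exact Fin.ext (by simp only; omega)
    · omega
  rw [show g = f ∘ extPM (2 * (n - 1)) (2 * n) (by omega) from funext hg]
  exact (pmDeg_comp_extPM_le _ (by omega) f hsupp).trans (le_max_left _ _)
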